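/- Let Δ be a real number with Δ ≠ -1. There exist constants C > 0 and T₀ > e such that for every T ≥ T₀, every U with 0 < U ≤ T / Real.log T, and every α with T < α < T + U, one has |(1/(U · α^Δ)) · ∫_T^{T+U} t^Δ dt − 1| ≤ C / Real.log T. -/

import Mathlib

/-!
On `[T, T + U]` with `U ≤ T` every point is within a factor `2` of `α`, so the derivative
`Δ t ^ (Δ - 1)` of `t ^ Δ` is `O(α ^ Δ / T)` there. By the mean value theorem `t ^ Δ` then differs
from `α ^ Δ` by `O(U α ^ Δ / T)`, hence so does its mean over `[T, T + U]`, and the relative error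
`O(U / T)` is `O(1 / log T)` once `U ≤ T / log T`.
-/

open Real Set intervalIntegral

lemma rpow_le_two_rpow_abs_mul_rpow {x a : ℝ} (s : ℝ) (ha : 0 < a) (hlo : a / 2 ≤ x)
    (hhi : x ≤ 2 * a) : x ^ s ≤ 2 ^ |s| * a ^ s := by
  have hx : 0 < x := by linarith
  have hratio : (x / a) ^ s ≤ 2 ^ |s| := by
    rcases le_or_gt 0 s with hs | hs
    · rw [abs_of_nonneg hs]
      exact rpow_le_rpow (by positivity) ((div_le_iff₀ ha).2 hhi) hs
    · rw [abs_of_neg hs, rpow_neg zero_le_two, ← inv_rpow zero_le_two]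
      exact rpow_le_rpow_of_nonpos (by norm_num) ((le_div_iff₀ ha).2 (by linarith)) hs.le
  calc x ^ s = (x / a) ^ s * a ^ s := by
        rw [← mul_rpow (by positivity) ha.le, div_mul_cancel₀ x ha.ne']
    _ ≤ 2 ^ |s| * a ^ s := by gcongr

theorem abs_integral_sub_mul_le_of_abs_deriv_le {f f' : ℝ → ℝ} {a b c K : ℝ} (hab : a ≤ b)
    (hf : ∀ x ∈ Icc a b, HasDerivWithinAt f (f' x) (Icc a b) x)
    (hf' : ∀ x ∈ Icc a b, |f' x| ≤ K) (hc : c ∈ Icc a b) :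
    |(∫ x in a..b, f x) - (b - a) * f c| ≤ K * (b - a) ^ 2 := by
  have hlip : ∀ x ∈ Icc a b, |f x - f c| ≤ K * (b - a) := fun x hx => by
    refine ((convex_Icc a b).norm_image_sub_le_of_norm_hasDerivWithin_le hf hf' hc hx).trans ?_
    gcongr
    · exact (abs_nonneg _).trans (hf' c hc)
    · rw [norm_eq_abs, abs_le]
      constructor <;> linarith [hc.1, hc.2, hx.1, hx.2]
  have hint : IntervalIntegrable f MeasureTheory.volume a b :=
    ContinuousOn.intervalIntegrable (by
      rw [uIcc_of_le hab]
      exact fun x hx => (hf x hx).continuousWithinAt)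
  have hsub : (∫ x in a..b, f x) - (b - a) * f c = ∫ x in a..b, (f x - f c) := by
    rw [integral_sub hint intervalIntegrable_const, integral_const, smul_eq_mul]
  rw [hsub]
  calc |∫ x in a..b, (f x - f c)| ≤ K * (b - a) * |b - a| := by
        refine norm_integral_le_of_norm_le_const (f := fun x => f x - f c) fun x hx => ?_
        rw [uIoc_of_le hab] at hx
        exact hlip x (Ioc_subset_Icc_self hx)
    _ = K * (b - a) ^ 2 := by rw [abs_of_nonneg (sub_nonneg.2 hab)]; ring

lemma abs_mul_rpow_sub_one_le {Δ T U α x : ℝ} (hT : 0 < T) (hUT : U ≤ T)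
    (hα : α ∈ Icc T (T + U)) (hx : x ∈ Icc T (T + U)) :
    |Δ * x ^ (Δ - 1)| ≤ |Δ| * 2 ^ |Δ - 1| * α ^ Δ / T := by
  have hαpos : 0 < α := hT.trans_le hα.1
  have hxpos : 0 < x := hT.trans_le hx.1
  have hpow : x ^ (Δ - 1) ≤ 2 ^ |Δ - 1| * α ^ (Δ - 1) :=
    rpow_le_two_rpow_abs_mul_rpow _ hαpos (by linarith [hα.2, hx.1]) (by linarith [hα.1, hx.2])
  rw [rpow_sub_one hαpos.ne'] at hpow
  rw [abs_mul, abs_of_pos (rpow_pos_of_pos hxpos _), mul_div_assoc]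
  calc |Δ| * x ^ (Δ - 1) ≤ |Δ| * (2 ^ |Δ - 1| * (α ^ Δ / α)) := by gcongr
    _ ≤ |Δ| * (2 ^ |Δ - 1| * (α ^ Δ / T)) := by gcongr; exact hα.1
    _ = |Δ| * 2 ^ |Δ - 1| * (α ^ Δ / T) := by ring

theorem abs_average_rpow_div_rpow_sub_one_le (Δ : ℝ) {T U α : ℝ} (hT : 0 < T) (hU : 0 < U)
    (hUT : U ≤ T) (hα : α ∈ Icc T (T + U)) :
    |(1 / (U * α ^ Δ)) * (∫ t in T..(T + U), t ^ Δ) - 1| ≤ |Δ| * 2 ^ |Δ - 1| * U / T := by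
  have hαΔ : 0 < α ^ Δ := rpow_pos_of_pos (hT.trans_le hα.1) Δ
  have hderiv : ∀ x ∈ Icc T (T + U),
      HasDerivWithinAt (fun t => t ^ Δ) (Δ * x ^ (Δ - 1)) (Icc T (T + U)) x := fun x hx =>
    (hasDerivAt_rpow_const (Or.inl (hT.trans_le hx.1).ne')).hasDerivWithinAt
  have hmvt := abs_integral_sub_mul_le_of_abs_deriv_le (by linarith) hderiv
    (fun x hx => abs_mul_rpow_sub_one_le hT hUT hα hx) hα
  rw [add_sub_cancel_left] at hmvt
  have hrel : (1 / (U * α ^ Δ)) * (∫ t in T..(T + U), t ^ Δ) - 1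
      = ((∫ t in T..(T + U), t ^ Δ) - U * α ^ Δ) / (U * α ^ Δ) := by
    field_simp
  rw [hrel, abs_div, abs_of_pos (mul_pos hU hαΔ), div_le_iff₀ (mul_pos hU hαΔ)]
  calc _ ≤ |Δ| * 2 ^ |Δ - 1| * α ^ Δ / T * U ^ 2 := hmvt
    _ = |Δ| * 2 ^ |Δ - 1| * U / T * (U * α ^ Δ) := by ring

theorem power_mean_over_intermediate_general (Δ : ℝ) :
    ∃ C > 0, ∃ T₀ > Real.exp 1, ∀ T ≥ T₀, ∀ U : ℝ, 0 < U → U ≤ T / Real.log T →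
      ∀ α : ℝ, T < α → α < T + U →
        |(1 / (U * α ^ Δ)) * (∫ t in T..(T + U), t ^ Δ) - 1| ≤ C / Real.log T := by
  refine ⟨|Δ| * 2 ^ |Δ - 1| + 1, by positivity, exp 1 + 1, by linarith, ?_⟩
  intro T hT U hU hUle α hTα hαU
  have hTe : exp 1 < T := by linarith
  have hTpos : 0 < T := (exp_pos 1).trans hTe
  have hlog : 1 < log T := by simpa using log_lt_log (exp_pos 1) hTe
  have hUT : U ≤ T := hUle.trans (div_le_self hTpos.le hlog.le)
  have hUT_log : U / T ≤ 1 / log T := by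
    rw [div_le_iff₀ hTpos, one_div_mul_eq_div]
    exact hUle
  calc _ ≤ |Δ| * 2 ^ |Δ - 1| * U / T :=
        abs_average_rpow_div_rpow_sub_one_le Δ hTpos hU hUT ⟨hTα.le, hαU.le⟩
    _ = (|Δ| * 2 ^ |Δ - 1|) * (U / T) := by ring
    _ ≤ (|Δ| * 2 ^ |Δ - 1| + 1) * (1 / log T) := by gcongr; linarith
    _ = (|Δ| * 2 ^ |Δ - 1| + 1) / log T := by ring

theorem power_mean_over_intermediate (Δ : ℝ) (hΔ : Δ ≠ -1) :
    ∃ C > 0, ∃ T₀ > Real.exp 1, ∀ T ≥ T₀, ∀ U : ℝ, 0 < U → U ≤ T / Real.log T →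
      ∀ α : ℝ, T < α → α < T + U →
        |(1 / (U * α ^ Δ)) * (∫ t in T..(T + U), t ^ Δ) - 1| ≤ C / Real.log T :=
  power_mean_over_intermediate_general Δ
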